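/- Let K ≥ 1, let w_1, …, w_K be nonnegative reals with Σ_k w_k = 1, and let L_1, …, L_K : E → ℝ (E a finite-dimensional real inner product space) be differentiable functions whose gradients are M-Lipschitz (M > 0). Set L = Σ_k w_k·L_k, and assume L satisfies the Polyak–Łojasiewicz inequality with constant μ > 0 and lower bound L*. Then for any θ, θ^1, …, θ^K ∈ E, any η > 0, and ḡ = Σ_k w_k·∇L_k(θ^k): −η·⟨∇L(θ), ḡ⟩ ≤ −μ·η·(L(θ) − L*) − (η/2)·‖ḡ‖² + (η·M²/2)·Σ_k w_k·‖θ − θ^k‖². (Inner-product bound, equation (103) in the proof of the paper's Lemma 1.) -/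

import Mathlib

open scoped RealInnerProductSpace

lemma grad_wsum {E : Type*} [NormedAddCommGroup E] [InnerProductSpace ℝ E]
    [CompleteSpace E] (K : ℕ) (w : Fin K → ℝ) (Lk : Fin K → E → ℝ)
    (hdiff : ∀ k, Differentiable ℝ (Lk k)) (x : E) :
    gradient (fun y => ∑ k, w k * Lk k y) x = ∑ k, w k • gradient (Lk k) x := by
  have h : HasGradientAt (fun y => ∑ k, w k * Lk k y)
      (∑ k, w k • gradient (Lk k) x) x := by
    rw [hasGradientAt_iff_hasFDerivAt, map_sum]
    have : ∀ k : Fin K, HasFDerivAt (fun y => w k * Lk k y)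
        ((InnerProductSpace.toDual ℝ E) (w k • gradient (Lk k) x)) x := by
      intro k
      have hk : HasFDerivAt (Lk k)
          ((InnerProductSpace.toDual ℝ E) (gradient (Lk k) x)) x := by
        have := ((hdiff k) x).hasFDerivAt
        rwa [show (InnerProductSpace.toDual ℝ E) (gradient (Lk k) x)
            = fderiv ℝ (Lk k) x by
          simp [gradient]] 
      simpa [map_smul, smul_eq_mul] using hk.const_mul (w k)
    exact HasFDerivAt.fun_sum (fun k _ => this k)
  exact h.gradient

/-- Inner-product bound, equation (103) in the proof of the paper's Lemma 1. -/
theorem stmt_6 {E : Type*} [NormedAddCommGroup E] [InnerProductSpace ℝ E]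
    [FiniteDimensional ℝ E]
    (K : ℕ) (hK : 1 ≤ K)
    (w : Fin K → ℝ) (hw : ∀ k, 0 ≤ w k) (hwsum : ∑ k, w k = 1)
    (Lk : Fin K → E → ℝ) (M μ Lstar η : ℝ)
    (hM : 0 < M) (hμ : 0 < μ) (hη : 0 < η)
    (hdiff : ∀ k, Differentiable ℝ (Lk k))
    (hlip : ∀ k, ∀ x y : E, ‖gradient (Lk k) x - gradient (Lk k) y‖ ≤ M * ‖x - y‖)
    (Lfun : E → ℝ) (hLdef : Lfun = fun x => ∑ k, w k * Lk k x)
    (hlb : ∀ x, Lstar ≤ Lfun x)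
    (hPL : ∀ x, μ * (Lfun x - Lstar) ≤ (1 / 2) * ‖gradient Lfun x‖ ^ 2)
    (θ : E) (θk : Fin K → E)
    (gbar : E) (hgbar : gbar = ∑ k, w k • gradient (Lk k) (θk k)) :
    -η * ⟪gradient Lfun θ, gbar⟫ ≤
      -μ * η * (Lfun θ - Lstar) - (η / 2) * ‖gbar‖ ^ 2
        + (η * M ^ 2 / 2) * ∑ k, w k * ‖θ - θk k‖ ^ 2 := by
  set g := gradient Lfun θ with hg
  have hgrad : g = ∑ k, w k • gradient (Lk k) θ := by
    rw [hg, hLdef, grad_wsum K w Lk hdiff θ]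
  -- difference
  have hdiffsum : g - gbar = ∑ k, w k • (gradient (Lk k) θ - gradient (Lk k) (θk k)) := by
    rw [hgrad, hgbar, ← Finset.sum_sub_distrib]
    simp [smul_sub]
  set v : Fin K → ℝ := fun k => ‖gradient (Lk k) θ - gradient (Lk k) (θk k)‖ with hv
  have hnorm1 : ‖g - gbar‖ ≤ ∑ k, w k * v k := by
    rw [hdiffsum]
    refine (norm_sum_le _ _).trans_eq ?_
    refine Finset.sum_congr rfl fun k _ => ?_
    rw [norm_smul, Real.norm_eq_abs, abs_of_nonneg (hw k)]
  have hCS : (∑ k, w k * v k) ^ 2 ≤ ∑ k, w k * v k ^ 2 := by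
    have := Finset.sum_mul_sq_le_sq_mul_sq Finset.univ
      (fun k => Real.sqrt (w k)) (fun k => Real.sqrt (w k) * v k)
    have h1 : ∀ k : Fin K, Real.sqrt (w k) * (Real.sqrt (w k) * v k) = w k * v k := by
      intro k; rw [← mul_assoc, Real.mul_self_sqrt (hw k)]
    have h2 : ∀ k : Fin K, Real.sqrt (w k) ^ 2 = w k := fun k => Real.sq_sqrt (hw k)
    have h3 : ∀ k : Fin K, (Real.sqrt (w k) * v k) ^ 2 = w k * v k ^ 2 := by
      intro k; rw [mul_pow, h2]
    simp only [h1, h2, h3] at this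
    simpa [hwsum] using this
  have hsq : ‖g - gbar‖ ^ 2 ≤ M ^ 2 * ∑ k, w k * ‖θ - θk k‖ ^ 2 := by
    have hwv : 0 ≤ ∑ k, w k * v k :=
      Finset.sum_nonneg fun k _ => mul_nonneg (hw k) (norm_nonneg _)
    have h1 : ‖g - gbar‖ ^ 2 ≤ (∑ k, w k * v k) ^ 2 :=
      pow_le_pow_left₀ (norm_nonneg _) hnorm1 2
    have h2 : ∑ k, w k * v k ^ 2 ≤ ∑ k, w k * (M ^ 2 * ‖θ - θk k‖ ^ 2) := by
      refine Finset.sum_le_sum fun k _ => mul_le_mul_of_nonneg_left ?_ (hw k)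
      have := hlip k θ (θk k)
      calc v k ^ 2 ≤ (M * ‖θ - θk k‖) ^ 2 :=
            pow_le_pow_left₀ (norm_nonneg _) this 2
        _ = M ^ 2 * ‖θ - θk k‖ ^ 2 := by ring
    calc ‖g - gbar‖ ^ 2 ≤ (∑ k, w k * v k) ^ 2 := h1
      _ ≤ ∑ k, w k * v k ^ 2 := hCS
      _ ≤ ∑ k, w k * (M ^ 2 * ‖θ - θk k‖ ^ 2) := h2
      _ = M ^ 2 * ∑ k, w k * ‖θ - θk k‖ ^ 2 := by
          rw [Finset.mul_sum]; exact Finset.sum_congr rfl fun k _ => by ring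
  have hid : ⟪g, gbar⟫ = (1/2) * ‖g‖ ^ 2 + (1/2) * ‖gbar‖ ^ 2 - (1/2) * ‖g - gbar‖ ^ 2 := by
    have := @norm_sub_sq_real E _ _ g gbar
    linarith
  have hpl := hPL θ
  rw [← hg] at hpl
  nlinarith [hsq, hid, hη.le, mul_le_mul_of_nonneg_left hsq (le_of_lt hη),
    mul_le_mul_of_nonneg_left hpl (le_of_lt hη)]
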